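/- Let K₁, K₂, K₃, K₄ be positive reals with K₄ ≤ 1/k₆, and define λ̄₁(λ) = λ − 2λ₁ − k₂/K₁ − k₃/K₂ − 2k₁ − k₇² − k₈² and λ̄₂(λ) = −λ − 2λ₂ − (k₄ + k₅)/K₃ − k₆/K₄, where all k_i ≥ 0 and λ₁, λ₂ ∈ ℝ. If 2(λ₁ + λ₂) < −2k₁ − k₆² − k₇² − k₈², then there exist λ ∈ ℝ and positive K₁, K₂, K₃ and K₄ ∈ (0, 1/k₆] such that simultaneously λ̄₁(λ) > 0, λ̄₂(λ) > 0, and 1 − k₆K₄ > 0 (taking K₄ = 1/k₆ convention when k₆ = 0). -/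

import Mathlib

/-! The two rate conditions say exactly that `λ` lies strictly between
`A = 2λ₁ + k₂/K₁ + k₃/K₂ + 2k₁ + k₇² + k₈²` and `B = −2λ₂ − (k₄ + k₅)/K₃ − k₆/K₄`, so it suffices
to make `A < B`. Split the dissipativity gap into four parts `ε`: taking `K₁, K₂, K₃` large makes
each of `k₂/K₁, k₃/K₂, (k₄ + k₅)/K₃` smaller than `ε`, and taking `K₄` just below `1/k₆` makes
`k₆/K₄` smaller than `k₆² + ε`. -/

open Filter Topology

lemma exists_pos_div_lt (c : ℝ) {ε : ℝ} (hε : 0 < ε) : ∃ K : ℝ, 0 < K ∧ c / K < ε :=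
  (((tendsto_const_nhds.div_atTop tendsto_id).eventually (gt_mem_nhds hε)).and
    (eventually_gt_atTop 0)).exists.imp fun _ h => ⟨h.2, h.1⟩

lemma exists_lt_inv_div_lt_sq_add {k ε : ℝ} (hk : 0 < k) (hε : 0 < ε) :
    ∃ K : ℝ, 0 < K ∧ K < 1 / k ∧ k / K < k ^ 2 + ε := by
  have hcont : Tendsto (fun K => k / K) (𝓝[<] (1 / k)) (𝓝 (k ^ 2)) := by
    have h : ContinuousAt (fun K => k / K) (1 / k) :=
      continuousAt_const.div continuousAt_id (one_div_ne_zero hk.ne')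
    convert h.tendsto.mono_left nhdsWithin_le_nhds using 2
    field_simp
  have hpos : ∀ᶠ K in 𝓝[<] (1 / k), 0 < K :=
    nhdsWithin_le_nhds (eventually_gt_nhds (one_div_pos.mpr hk))
  have hlt : ∀ᶠ K in 𝓝[<] (1 / k), K < 1 / k := eventually_mem_nhdsWithin
  exact (hpos.and (hlt.and (hcont.eventually (gt_mem_nhds (by linarith))))).exists

theorem discounting_rate_compatibility_general
    (lam₁ lam₂ k₁ k₂ k₃ k₄ k₅ k₆ k₇ k₈ : ℝ)
    (hk₆ : 0 < k₆)
    (hdiss : 2 * (lam₁ + lam₂) < -2 * k₁ - k₆ ^ 2 - k₇ ^ 2 - k₈ ^ 2) :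
    ∃ (lam K₁ K₂ K₃ K₄ : ℝ), 0 < K₁ ∧ 0 < K₂ ∧ 0 < K₃ ∧ 0 < K₄ ∧ K₄ ≤ 1 / k₆ ∧
      0 < lam - 2 * lam₁ - k₂ / K₁ - k₃ / K₂ - 2 * k₁ - k₇ ^ 2 - k₈ ^ 2 ∧
      0 < -lam - 2 * lam₂ - (k₄ + k₅) / K₃ - k₆ / K₄ ∧
      0 < 1 - k₆ * K₄ := by
  obtain ⟨ε, hε, hgap⟩ : ∃ ε : ℝ, 0 < ε ∧
      2 * (lam₁ + lam₂) + 4 * ε = -2 * k₁ - k₆ ^ 2 - k₇ ^ 2 - k₈ ^ 2 :=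
    ⟨(-2 * k₁ - k₆ ^ 2 - k₇ ^ 2 - k₈ ^ 2 - 2 * (lam₁ + lam₂)) / 4, by linarith, by ring⟩
  obtain ⟨K₁, hK₁, h₁⟩ := exists_pos_div_lt k₂ hε
  obtain ⟨K₂, hK₂, h₂⟩ := exists_pos_div_lt k₃ hε
  obtain ⟨K₃, hK₃, h₃⟩ := exists_pos_div_lt (k₄ + k₅) hε
  obtain ⟨K₄, hK₄, hK₄lt, h₄⟩ := exists_lt_inv_div_lt_sq_add hk₆ hε
  have hrates : 2 * lam₁ + k₂ / K₁ + k₃ / K₂ + 2 * k₁ + k₇ ^ 2 + k₈ ^ 2 <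
      -2 * lam₂ - (k₄ + k₅) / K₃ - k₆ / K₄ := by linarith
  obtain ⟨lam, hlo, hhi⟩ := exists_between hrates
  have hkK : k₆ * K₄ < 1 := (lt_div_iff₀' hk₆).mp hK₄lt
  exact ⟨lam, K₁, K₂, K₃, K₄, hK₁, hK₂, hK₃, hK₄, hK₄lt.le, by linarith, by linarith,
    by linarith⟩

/-- Algebraic compatibility of the discounting rates: if
`2(λ₁ + λ₂) < −2k₁ − k₆² − k₇² − k₈²`, then one can choose `λ ∈ ℝ`,
`K₁, K₂, K₃ > 0` and `K₄ ∈ (0, 1/k₆]` such that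
`λ̄₁(λ) = λ − 2λ₁ − k₂/K₁ − k₃/K₂ − 2k₁ − k₇² − k₈² > 0`,
`λ̄₂(λ) = −λ − 2λ₂ − (k₄ + k₅)/K₃ − k₆/K₄ > 0` and `1 − k₆K₄ > 0`. -/
theorem discounting_rate_compatibility
    (lam₁ lam₂ k₁ k₂ k₃ k₄ k₅ k₆ k₇ k₈ : ℝ)
    (hk₁ : 0 ≤ k₁) (hk₂ : 0 ≤ k₂) (hk₃ : 0 ≤ k₃) (hk₄ : 0 ≤ k₄) (hk₅ : 0 ≤ k₅)
    (hk₆ : 0 < k₆) (hk₇ : 0 ≤ k₇) (hk₈ : 0 ≤ k₈)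
    (hdiss : 2 * (lam₁ + lam₂) < -2 * k₁ - k₆ ^ 2 - k₇ ^ 2 - k₈ ^ 2) :
    ∃ (lam K₁ K₂ K₃ K₄ : ℝ), 0 < K₁ ∧ 0 < K₂ ∧ 0 < K₃ ∧ 0 < K₄ ∧ K₄ ≤ 1 / k₆ ∧
      0 < lam - 2 * lam₁ - k₂ / K₁ - k₃ / K₂ - 2 * k₁ - k₇ ^ 2 - k₈ ^ 2 ∧
      0 < -lam - 2 * lam₂ - (k₄ + k₅) / K₃ - k₆ / K₄ ∧
      0 < 1 - k₆ * K₄ :=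
  discounting_rate_compatibility_general lam₁ lam₂ k₁ k₂ k₃ k₄ k₅ k₆ k₇ k₈ hk₆ hdiss
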